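/- For n ∈ ℕ, let X_n be n iid St. Petersburg lotteries. For positive integers k, ℓ with ℓ/k = 2^a for some a ∈ ℕ, the average of k of them is first-order stochastically dominated by the average of ℓ of them: (1/k)Σ_{i=1}^k X_i ≤_st (1/ℓ)Σ_{i=1}^ℓ X_i. -/

import Mathlib

open MeasureTheory ProbabilityTheory Real Finset

noncomputable section

variable {Ω : Type*} [MeasurableSpace Ω]

/-- `X ~ Pareto(α)` : cdf `1 - x^(-α)` for `x ≥ 1`. -/
def IsPareto (P : Measure Ω) (α : ℝ) (X : Ω → ℝ) : Prop :=
  Measurable X ∧ (∀ x : ℝ, 1 ≤ x → P {ω | x < X ω} = ENNReal.ofReal (x ^ (-α))) ∧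
    P {ω | X ω < 1} = 0

/-- the increasing rearrangement of a vector -/
def sortedVec {n : ℕ} (f : Fin n → ℝ) : Fin n → ℝ := f ∘ Tuple.sort f

/-- `MajorizedBy θ η` : `θ ⪯ η`, i.e. equal sums and the sum of the `k` smallest
components of `θ` is at least that of `η` for each `k`. -/
def MajorizedBy {n : ℕ} (θ η : Fin n → ℝ) : Prop :=
  (∑ i, θ i = ∑ i, η i) ∧
  ∀ k : ℕ, k ≤ n →
    ∑ i ∈ Finset.univ.filter (fun i : Fin n => (i : ℕ) < k), sortedVec η i ≤
    ∑ i ∈ Finset.univ.filter (fun i : Fin n => (i : ℕ) < k), sortedVec θ i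

/-- St. Petersburg lottery: takes value `2^k` with probability `2^(-k)` for `k ≥ 1`. -/
def IsStPetersburg (P : Measure Ω) (X : Ω → ℝ) : Prop :=
  Measurable X ∧ ∀ k : ℕ, 1 ≤ k → P {ω | X ω = 2 ^ k} = ((2 : ENNReal) ^ k)⁻¹

/-!
The heart of the matter is the two-variable case `2X₁ ≤ₛₜ X₁ + X₂`. For `2^{m+1} ≤ t < 2^{m+2}` one has `P(2X₁ > t) = 2^{-m}`, while the disjoint
events `X₁ ≥ 2^{m+2}`, `X₁ < 2^{m+2} ≤ X₂` and `X₁ = X₂ = 2^{m+1}` each force `X₁ + X₂ > t` and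
have total probability `q + (1 - q)q + q² = 2q = 2^{-m}`, where `q = 2^{-(m+1)}`.
Stochastic dominance is preserved by convolution, so by induction on `n` the law of
`2(X₁ + ⋯ + Xₙ)` is dominated by that of `X₁ + ⋯ + X₂ₙ`; iterating this `a` times and rescaling
by `1/(k 2^a)` gives the theorem.
-/

open Set

def StochLE (ν ρ : Measure ℝ) : Prop := ∀ t, ρ (Iic t) ≤ ν (Iic t)

infix:50 " ≤ₛₜ " => StochLE

theorem MeasureTheory.Measure.conv_apply_Iic (ν ρ : Measure ℝ) [SFinite ρ] (t : ℝ) :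
    (ν ∗ ρ) (Iic t) = ∫⁻ x, ρ (Iic (t - x)) ∂ν := by
  rw [Measure.conv, Measure.map_apply measurable_add measurableSet_Iic,
    Measure.prod_apply (measurable_add measurableSet_Iic)]
  refine lintegral_congr fun x => congrArg ρ ?_
  ext y
  simp only [Set.mem_preimage, Set.mem_Iic]
  constructor <;> intro <;> linarith

instance {ν : Measure ℝ} [IsProbabilityMeasure ν] (c : ℝ) :
    IsProbabilityMeasure (ν.map (c * ·)) :=
  Measure.isProbabilityMeasure_map (measurable_const_mul c).aemeasurable

namespace StochLE

variable {ν ν' ρ ρ' τ : Measure ℝ}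

theorem refl (ν : Measure ℝ) : ν ≤ₛₜ ν := fun _ => le_rfl

theorem trans (h₁ : ν ≤ₛₜ ρ) (h₂ : ρ ≤ₛₜ τ) : ν ≤ₛₜ τ := fun t => (h₂ t).trans (h₁ t)

theorem of_measure_Ioi_le [IsProbabilityMeasure ν] [IsProbabilityMeasure ρ]
    (h : ∀ t, ν (Ioi t) ≤ ρ (Ioi t)) : ν ≤ₛₜ ρ := fun t => by
  rw [← compl_Ioi, prob_compl_eq_one_sub measurableSet_Ioi,
    prob_compl_eq_one_sub measurableSet_Ioi]
  exact tsub_le_tsub_left (h t) 1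

theorem conv_left [SFinite ν] [SFinite ν'] (h : ν ≤ₛₜ ν') : ρ ∗ ν ≤ₛₜ ρ ∗ ν' := fun t => by
  simp only [Measure.conv_apply_Iic]
  exact lintegral_mono fun x => h _

theorem conv [SFinite ν] [SFinite ν'] [SFinite ρ] [SFinite ρ'] (hν : ν ≤ₛₜ ν')
    (hρ : ρ ≤ₛₜ ρ') : ν ∗ ρ ≤ₛₜ ν' ∗ ρ' := by
  refine hρ.conv_left.trans ?_
  rw [Measure.conv_comm ν, Measure.conv_comm ν']
  exact hν.conv_left

theorem map_const_mul [IsProbabilityMeasure ν] [IsProbabilityMeasure ρ] (h : ν ≤ₛₜ ρ) {c : ℝ}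
    (hc : 0 ≤ c) : ν.map (c * ·) ≤ₛₜ ρ.map (c * ·) := fun t => by
  have hmeas : Measurable (c * · : ℝ → ℝ) := measurable_const_mul c
  simp only [Measure.map_apply hmeas measurableSet_Iic]
  rcases hc.eq_or_lt with rfl | hc
  · by_cases ht : 0 ≤ t <;> simp [ht]
  · have hpre : (c * · : ℝ → ℝ) ⁻¹' Iic t = Iic (t / c) := by
      ext x
      simp [le_div_iff₀ hc, mul_comm]
    rw [hpre]
    exact h _

end StochLE

def convPow (μ : Measure ℝ) : ℕ → Measure ℝ
  | 0 => Measure.dirac 0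
  | n + 1 => convPow μ n ∗ μ

section convPow

variable {μ : Measure ℝ} [IsProbabilityMeasure μ]

instance (n : ℕ) : IsProbabilityMeasure (convPow μ n) := by
  induction n with
  | zero => rw [convPow]; infer_instance
  | succ n ih => rw [convPow]; infer_instance

theorem map_two_mul_convPow_stochLE (h : μ.map (2 * ·) ≤ₛₜ μ ∗ μ) (n : ℕ) :
    (convPow μ n).map (2 * ·) ≤ₛₜ convPow μ (2 * n) := by
  induction n with
  | zero => simp [convPow, StochLE.refl]
  | succ n ih =>
    have hmap : (convPow μ (n + 1)).map (2 * ·)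
        = (convPow μ n).map (2 * ·) ∗ μ.map (2 * ·) :=
      Measure.map_conv_addMonoidHom (AddMonoidHom.mulLeft (2 : ℝ)) (measurable_const_mul 2)
    rw [hmap, show 2 * (n + 1) = 2 * n + 1 + 1 by ring, convPow, convPow, Measure.conv_assoc]
    exact ih.conv h

theorem map_pow_two_mul_convPow_stochLE (h : μ.map (2 * ·) ≤ₛₜ μ ∗ μ) (n a : ℕ) :
    (convPow μ n).map (2 ^ a * ·) ≤ₛₜ convPow μ (n * 2 ^ a) := by
  induction a with
  | zero => simp [StochLE.refl]
  | succ a ih =>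
    have hmap : (convPow μ n).map (2 ^ (a + 1) * ·)
        = ((convPow μ n).map (2 ^ a * ·)).map (2 * ·) := by
      rw [Measure.map_map (measurable_const_mul 2) (measurable_const_mul _)]
      congr 1
      ext x
      simp only [Function.comp_apply]
      ring
    rw [hmap, show n * 2 ^ (a + 1) = 2 * (n * 2 ^ a) by ring]
    exact (ih.map_const_mul zero_le_two).trans (map_two_mul_convPow_stochLE h _)

end convPow

theorem map_sum_range_eq_convPow {P : Measure Ω} [IsProbabilityMeasure P] {μ : Measure ℝ}
    {X : ℕ → Ω → ℝ} (hmeas : ∀ i, Measurable (X i)) (hlaw : ∀ i, P.map (X i) = μ)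
    (hind : iIndepFun X P) (n : ℕ) :
    P.map (fun ω => ∑ i ∈ range n, X i ω) = convPow μ n := by
  induction n with
  | zero => simp [convPow]
  | succ n ih =>
    have hindep : IndepFun (fun ω => ∑ i ∈ range n, X i ω) (X n) P := by
      simpa only [← Finset.sum_apply] using
        hind.indepFun_finsetSum_of_notMem hmeas notMem_range_self
    rw [convPow, ← ih, ← hlaw n, ← hindep.map_add_eq_map_conv_map
      (Finset.measurable_sum _ fun i _ => hmeas i) (hmeas n)]
    congr 1
    ext ω
    simp [sum_range_succ]

theorem ENNReal.tsum_ite_le_inv_two_pow (m : ℕ) :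
    ∑' k : ℕ, (if m ≤ k then ((2 : ENNReal) ^ (k + 1))⁻¹ else 0) = ((2 : ENNReal) ^ m)⁻¹ := by
  rw [← ENNReal.summable.sum_add_tsum_nat_add',
    sum_eq_zero fun k hk => if_neg (by simpa using hk)]
  have h (j : ℕ) : ((2 : ENNReal) ^ (j + m + 1))⁻¹ = 2⁻¹ ^ (j + 1) * 2⁻¹ ^ m := by
    rw [← pow_add, ENNReal.inv_pow, add_right_comm]
  simp only [le_add_iff_nonneg_left, zero_le, if_true, h, ENNReal.tsum_mul_right,
    ENNReal.tsum_geometric_add_one, ENNReal.one_sub_inv_two, inv_inv,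
    ENNReal.inv_mul_cancel two_ne_zero ENNReal.ofNat_ne_top, zero_add, one_mul, ENNReal.inv_pow]

def stPetersburg : Measure ℝ :=
  Measure.sum fun k : ℕ => ((2 : ENNReal) ^ (k + 1))⁻¹ • Measure.dirac ((2 : ℝ) ^ (k + 1))

open scoped Classical in
theorem stPetersburg_apply {S : Set ℝ} (hS : MeasurableSet S) :
    stPetersburg S =
      ∑' k : ℕ, if (2 : ℝ) ^ (k + 1) ∈ S then ((2 : ENNReal) ^ (k + 1))⁻¹ else 0 := by
  simp [stPetersburg, Measure.sum_apply _ hS, Measure.dirac_apply' _ hS, Set.indicator_apply]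

open scoped Classical in
theorem stPetersburg_eq_inv_two_pow {S : Set ℝ} (hS : MeasurableSet S) {m : ℕ}
    (h : ∀ k : ℕ, (2 : ℝ) ^ (k + 1) ∈ S ↔ m ≤ k) : stPetersburg S = ((2 : ENNReal) ^ m)⁻¹ := by
  rw [stPetersburg_apply hS, ← ENNReal.tsum_ite_le_inv_two_pow]
  exact tsum_congr fun k => if_congr (h k) rfl rfl

instance : IsProbabilityMeasure stPetersburg :=
  ⟨by simpa using stPetersburg_eq_inv_two_pow MeasurableSet.univ (m := 0) (by simp)⟩

theorem stPetersburg_Ici (m : ℕ) :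
    stPetersburg (Ici ((2 : ℝ) ^ (m + 1))) = ((2 : ENNReal) ^ m)⁻¹ :=
  stPetersburg_eq_inv_two_pow measurableSet_Ici fun k => by
    simp [pow_le_pow_iff_right₀ (one_lt_two : (1 : ℝ) < 2)]

theorem stPetersburg_Ioi (m : ℕ) : stPetersburg (Ioi ((2 : ℝ) ^ m)) = ((2 : ENNReal) ^ m)⁻¹ :=
  stPetersburg_eq_inv_two_pow measurableSet_Ioi fun k => by
    simp [pow_lt_pow_iff_right₀ (one_lt_two : (1 : ℝ) < 2)]

theorem stPetersburg_singleton (m : ℕ) :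
    stPetersburg {(2 : ℝ) ^ (m + 1)} = ((2 : ENNReal) ^ (m + 1))⁻¹ := by
  rw [stPetersburg_apply (measurableSet_singleton _), tsum_eq_single m]
  · simp
  · intro k hk
    simp [hk]

theorem IsStPetersburg.map_eq {P : Measure Ω} [IsProbabilityMeasure P] {X : Ω → ℝ}
    (hX : IsStPetersburg P X) : P.map X = stPetersburg := by
  have hdisj : Pairwise (Function.onFun Disjoint fun k : ℕ => ({(2 : ℝ) ^ (k + 1)} : Set ℝ)) :=
    fun i j hij => by simpa [pow_right_inj₀] using hij
  have hrestrict : (P.map X).restrict (⋃ k : ℕ, {(2 : ℝ) ^ (k + 1)}) = stPetersburg := by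
    rw [Measure.restrict_iUnion hdisj fun _ => measurableSet_singleton _]
    congr 1
    funext k
    rw [Measure.restrict_singleton, Measure.map_apply hX.1 (measurableSet_singleton _)]
    exact congrArg (· • _) (hX.2 (k + 1) k.succ_pos)
  have := Measure.isProbabilityMeasure_map (μ := P) hX.1.aemeasurable
  exact (Measure.eq_of_le_of_isProbabilityMeasure (hrestrict ▸ Measure.restrict_le_self)).symm

theorem inv_two_pow_le_conv_stPetersburg_Ioi {t : ℝ} {m : ℕ} (ht : t < 2 ^ (m + 2)) :
    ((2 : ENNReal) ^ m)⁻¹ ≤ (stPetersburg ∗ stPetersburg) (Ioi t) := by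
  set μ := stPetersburg
  set a : ℝ := 2 ^ (m + 2)
  set q : ENNReal := ((2 : ENNReal) ^ (m + 1))⁻¹ with hq
  have h2a : (2 : ℝ) ≤ a := le_self_pow₀ one_le_two (by omega)
  have hμIci2 : μ (Ici (2 : ℝ)) = 1 := by simpa using stPetersburg_Ici 0
  have hμIcia : μ (Ici a) = q := stPetersburg_Ici (m + 1)
  have hμpt : μ {(2 : ℝ) ^ (m + 1)} = q := stPetersburg_singleton m
  have hIco_Ici : Disjoint (Ico (2 : ℝ) a) (Ici a) :=
    (Iio_disjoint_Ici le_rfl).mono_left Set.Ico_subset_Iio_self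
  have hμIco : μ (Ico (2 : ℝ) a) + q = 1 := by
    rw [← hμIcia, ← measure_union hIco_Ici measurableSet_Ici, Ico_union_Ici_eq_Ici h2a, hμIci2]
  let A₁ : Set (ℝ × ℝ) := Ici a ×ˢ Ici (2 : ℝ)
  let A₂ : Set (ℝ × ℝ) := Ico (2 : ℝ) a ×ˢ Ici a
  let A₃ : Set (ℝ × ℝ) := {(2 : ℝ) ^ (m + 1)} ×ˢ {(2 : ℝ) ^ (m + 1)}
  have hsub : A₁ ∪ A₂ ∪ A₃ ⊆ (fun p : ℝ × ℝ => p.1 + p.2) ⁻¹' Ioi t := by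
    have : a = 2 ^ (m + 1) + 2 ^ (m + 1) := by ring
    rintro ⟨x, y⟩ ((⟨hx, hy⟩ | ⟨hx, hy⟩) | ⟨hx, hy⟩) <;>
      simp only [Set.mem_Ici, Set.mem_Ico, Set.mem_singleton_iff] at hx hy <;>
      simp only [Set.mem_preimage, Set.mem_Ioi] <;> linarith
  have hdisj₁₂ : Disjoint A₁ A₂ :=
    Set.disjoint_prod.2 (Or.inl hIco_Ici.symm)
  have hdisj : Disjoint (A₁ ∪ A₂) A₃ := by
    have : (2 : ℝ) ^ (m + 1) < a := pow_lt_pow_right₀ one_lt_two (by omega)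
    refine Set.disjoint_union_left.2
      ⟨Set.disjoint_prod.2 (Or.inl ?_), Set.disjoint_prod.2 (Or.inr ?_)⟩ <;> simp [this.not_ge]
  calc ((2 : ENNReal) ^ m)⁻¹ = q + q := by
        rw [← two_mul, hq, pow_succ', ENNReal.mul_inv (by simp) (by simp), ← mul_assoc,
          ENNReal.mul_inv_cancel two_ne_zero ENNReal.ofNat_ne_top, one_mul]
    _ = (μ.prod μ) (A₁ ∪ A₂ ∪ A₃) := by
        rw [measure_union hdisj (measurableSet_singleton _ |>.prod (measurableSet_singleton _)),
          measure_union hdisj₁₂ (measurableSet_Ico.prod measurableSet_Ici)]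
        simp only [A₁, A₂, A₃, Measure.prod_prod, hμIci2, hμIcia, hμpt]
        rw [mul_one, add_assoc, ← add_mul, hμIco, one_mul]
    _ ≤ (μ ∗ μ) (Ioi t) := by
        rw [Measure.conv, Measure.map_apply measurable_add measurableSet_Ioi]
        exact measure_mono hsub

theorem stPetersburg_map_two_mul_stochLE :
    stPetersburg.map (2 * ·) ≤ₛₜ stPetersburg ∗ stPetersburg := by
  refine StochLE.of_measure_Ioi_le fun t => ?_
  rw [Measure.map_apply (measurable_const_mul 2) measurableSet_Ioi]
  rcases lt_or_ge t 2 with ht | ht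
  · refine prob_le_one.trans ?_
    simpa using inv_two_pow_le_conv_stPetersburg_Ioi (m := 0) (by norm_num; linarith)
  · obtain ⟨m, hm, hm'⟩ := exists_nat_pow_near (x := t / 2) (by linarith) one_lt_two
    calc stPetersburg ((2 * ·) ⁻¹' Ioi t) ≤ stPetersburg (Ioi (2 ^ m)) :=
          measure_mono fun x (hx : t < 2 * x) => show 2 ^ m < x by linarith
      _ = ((2 : ENNReal) ^ m)⁻¹ := stPetersburg_Ioi m
      _ ≤ _ := inv_two_pow_le_conv_stPetersburg_Ioi <| by
          rw [pow_succ] at hm'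
          rw [pow_succ, pow_succ]
          linarith

theorem stmt_11_general (P : Measure Ω) [IsProbabilityMeasure P]
    (X : ℕ → Ω → ℝ) (hX : ∀ i, IsStPetersburg P (X i))
    (hind : iIndepFun X P)
    (k l a : ℕ) (hl : l = k * 2 ^ a) :
    ∀ x : ℝ,
      P {ω | (1 / k : ℝ) * ∑ i ∈ Finset.range k, X i ω ≤ x} ≥
        P {ω | (1 / l : ℝ) * ∑ i ∈ Finset.range l, X i ω ≤ x} := by
  intro x
  have hmeas (i : ℕ) : Measurable (X i) := (hX i).1
  have hlaw (c : ℝ) (m : ℕ) : P {ω | c * ∑ i ∈ range m, X i ω ≤ x} =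
      ((convPow stPetersburg m).map (c * ·)) (Iic x) := by
    rw [← map_sum_range_eq_convPow hmeas (fun i => (hX i).map_eq) hind,
      Measure.map_map (measurable_const_mul c) (by fun_prop),
      Measure.map_apply (by fun_prop) measurableSet_Iic]
    rfl
  have hscale : ((1 / l : ℝ) * ·) ∘ (2 ^ a * ·) = ((1 / k : ℝ) * ·) := by
    funext y
    simp only [Function.comp_apply, hl]
    push_cast
    field_simp
  have hdom := (map_pow_two_mul_convPow_stochLE stPetersburg_map_two_mul_stochLE k a
    |>.map_const_mul (c := 1 / l) (by positivity)) x
  rwa [Measure.map_map (measurable_const_mul _) (measurable_const_mul _), hscale, ← hl,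
    ← hlaw, ← hlaw] at hdom

theorem stmt_11 (P : Measure Ω) [IsProbabilityMeasure P]
    (X : ℕ → Ω → ℝ) (hX : ∀ i, IsStPetersburg P (X i))
    (hind : iIndepFun X P)
    (k l a : ℕ) (hk : 0 < k) (ha : 1 ≤ a) (hl : l = k * 2 ^ a) :
    ∀ x : ℝ,
      P {ω | (1 / k : ℝ) * ∑ i ∈ Finset.range k, X i ω ≤ x} ≥
        P {ω | (1 / l : ℝ) * ∑ i ∈ Finset.range l, X i ω ≤ x} :=
  stmt_11_general P X hX hind k l a hl
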